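/- Let z : ℝ^d → Δ^{K} be measurable with values in the probability simplex, σ > 0, and define ẑ^c(x) = E_{η~N(0,σ²I)}[z^c(x+η)] for each class c. Fix x and label y, and suppose ẑ^y(x) ≥ max_{y'≠y} ẑ^{y'}(x). Let R = (σ/2)[Φ⁻¹(ẑ^y(x)) − Φ⁻¹(max_{y'≠y} ẑ^{y'}(x))]. Then for every δ with ‖δ‖₂ < R, argmax_c ẑ^c(x+δ) = y (i.e., ẑ^y(x+δ) ≥ ẑ^{y'}(x+δ) for all y' ≠ y). -/

import Mathlib

open MeasureTheory Real Set

noncomputable def Phi (x : ℝ) : ℝ :=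
  ∫ t in Set.Iic x, (Real.sqrt (2 * Real.pi))⁻¹ * Real.exp (-t ^ 2 / 2)

noncomputable def PhiInv : ℝ → ℝ := Function.invFun Phi

noncomputable def gaussMeasure (d : ℕ) (σ : ℝ) :
    Measure (EuclideanSpace ℝ (Fin d)) :=
  volume.withDensity fun x =>
    ENNReal.ofReal ((2 * Real.pi * σ ^ 2) ^ (-(d : ℝ) / 2) *
      Real.exp (-‖x‖ ^ 2 / (2 * σ ^ 2)))

/-!
Translating the Gaussian `gaussMeasure d σ` by `δ` multiplies it by the density
`exp ((⟪δ, η⟫ - ‖δ‖² / 2) / σ²)`, an increasing function of `⟪δ, η⟫`. By the Neyman–Pearson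
lemma, among `[0, 1]`-valued functions with Gaussian mean `p`, the indicator of a half-space
`{⟪δ, η⟫ ≤ c}` has the least mean under the translated Gaussian, namely `Φ (Φ⁻¹ p - ‖δ‖ / σ)`,
because `⟪u, η⟫` is `N(0, σ²)` for a unit vector `u`. Hence `x ↦ Φ⁻¹ (ẑᶜ x)` is `1/σ`-Lipschitz,
and a gap of more than `2 ‖δ‖ / σ` between `Φ⁻¹ (ẑʸ x)` and `Φ⁻¹` of the runner-up survives
the translation.
-/

open ProbabilityTheory
open scoped RealInnerProductSpace

lemma Phi_eq_integral_gaussianPDFReal (x : ℝ) :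
    Phi x = ∫ t in Iic x, gaussianPDFReal 0 1 t := by
  simp [Phi, gaussianPDFReal]

lemma Phi_eq_cdf_gaussianReal : Phi = cdf (gaussianReal 0 1) := by
  ext x
  rw [cdf_eq_real, measureReal_def, gaussianReal_apply_eq_integral _ one_ne_zero,
    ENNReal.toReal_ofReal (integral_nonneg fun t => gaussianPDFReal_nonneg 0 1 t),
    Phi_eq_integral_gaussianPDFReal]

lemma Phi_strictMono : StrictMono Phi := by
  intro a b hab
  have hint := integrable_gaussianPDFReal 0 1
  have hdiff := intervalIntegral.integral_Iic_sub_Iic (a := a) (b := b) hint.integrableOn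
    hint.integrableOn
  have hpos : 0 < ∫ t in a..b, gaussianPDFReal 0 1 t :=
    intervalIntegral.intervalIntegral_pos_of_pos hint.intervalIntegrable
      (fun t => gaussianPDFReal_pos 0 1 t one_ne_zero) hab
  rw [Phi_eq_integral_gaussianPDFReal, Phi_eq_integral_gaussianPDFReal]
  linarith

lemma Phi_continuous : Continuous Phi := by
  refine continuous_iff_continuousAt.2 fun x => ?_
  have h := (integrable_gaussianPDFReal 0 1).integrableOn.continuousOn_Iic_primitive_Iic
    (a₀ := x + 1)
  simp_rw [← Phi_eq_integral_gaussianPDFReal] at h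
  exact h.continuousAt (Iic_mem_nhds (lt_add_one x))

lemma Phi_PhiInv {p : ℝ} (hp : p ∈ Ioo 0 1) : Phi (PhiInv p) = p := by
  refine Function.invFun_eq (mem_range_of_exists_le_of_exists_ge Phi_continuous ?_ ?_)
  · rw [Phi_eq_cdf_gaussianReal]
    exact ((tendsto_cdf_atBot _).eventually (ge_mem_nhds hp.1)).exists
  · rw [Phi_eq_cdf_gaussianReal]
    exact ((tendsto_cdf_atTop _).eventually (le_mem_nhds hp.2)).exists

lemma PhiInv_le_PhiInv_iff {p q : ℝ} (hp : p ∈ Ioo 0 1) (hq : q ∈ Ioo 0 1) :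
    PhiInv p ≤ PhiInv q ↔ p ≤ q := by
  rw [← Phi_strictMono.le_iff_le, Phi_PhiInv hp, Phi_PhiInv hq]

theorem neyman_pearson {α : Type*} [MeasurableSpace α] {μ : Measure α} [IsFiniteMeasure μ]
    {L h : α → ℝ} {S : Set α} {k : ℝ} (hS : MeasurableSet S) (hL : Integrable L μ)
    (hh : AEStronglyMeasurable h μ) (h01 : ∀ x, h x ∈ Icc 0 1)
    (hLS : ∀ x ∈ S, L x ≤ k) (hLSc : ∀ x ∉ S, k ≤ L x) (hsize : ∫ x, h x ∂μ = μ.real S) :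
    ∫ x in S, L x ∂μ ≤ ∫ x, h x * L x ∂μ := by
  have hbound : ∀ᵐ x ∂μ, ‖h x‖ ≤ 1 :=
    ae_of_all _ fun x => by rw [Real.norm_of_nonneg (h01 x).1]; exact (h01 x).2
  have hhL : Integrable (fun x => h x * L x) μ := hL.bdd_mul hh hbound
  have hSL : Integrable (S.indicator L) μ := hL.indicator hS
  have hh' : Integrable h μ := .of_bound hh 1 hbound
  have hS1 : Integrable (S.indicator (1 : α → ℝ)) μ := (integrable_const 1).indicator hS
  -- the integrand is `(h - 1_S) (L - k) ≥ 0`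
  have hpos :
      0 ≤ ∫ x, (h x * L x - S.indicator L x) - k * (h x - S.indicator (1 : α → ℝ) x) ∂μ := by
    refine integral_nonneg fun x => ?_
    by_cases hx : x ∈ S
    · simp only [indicator_of_mem hx, Pi.one_apply, Pi.zero_apply]
      nlinarith [hLS x hx, (h01 x).2]
    · simp only [indicator_of_notMem hx, sub_zero, Pi.zero_apply]
      nlinarith [hLSc x hx, (h01 x).1]
  rw [integral_sub (by exact hhL.sub hSL) (by exact (hh'.sub hS1).const_mul k),
    integral_sub hhL hSL, integral_const_mul, integral_sub hh' hS1, integral_indicator hS,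
    integral_indicator_one hS, hsize] at hpos
  linarith

lemma stdGaussian_map_inner {E : Type*} [NormedAddCommGroup E] [InnerProductSpace ℝ E]
    [FiniteDimensional ℝ E] [MeasurableSpace E] [BorelSpace E] {u : E} (hu : ‖u‖ = 1) :
    (stdGaussian E).map (fun x => ⟪u, x⟫) = gaussianReal 0 1 := by
  have h := IsGaussian.map_eq_gaussianReal (μ := stdGaussian E) (innerSL ℝ u)
  rw [integral_strongDual_stdGaussian, variance_dual_stdGaussian, innerSL_apply_norm, hu] at h
  simpa using h

section GaussMeasure

open Complex

variable {d : ℕ} {σ : ℝ}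

lemma integral_exp_neg_sq_norm_div (hσ : σ ≠ 0) :
    ∫ x : EuclideanSpace ℝ (Fin d), Real.exp (-‖x‖ ^ 2 / (2 * σ ^ 2)) =
      (2 * π * σ ^ 2) ^ ((d : ℝ) / 2) := by
  have hb : 0 < (2 * σ ^ 2)⁻¹ := by positivity
  simp_rw [neg_div, div_eq_inv_mul _ (2 * σ ^ 2), ← neg_mul,
    GaussianFourier.integral_rexp_neg_mul_sq_norm hb, finrank_euclideanSpace, Fintype.card_fin]
  congr 1
  field_simp

lemma isFiniteMeasure_gaussMeasure (hσ : σ ≠ 0) : IsFiniteMeasure (gaussMeasure d σ) := by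
  refine isFiniteMeasure_withDensity_ofReal (Integrable.hasFiniteIntegral ?_)
  refine .const_mul (.of_integral_ne_zero ?_) _
  rw [integral_exp_neg_sq_norm_div hσ]
  positivity

lemma charFun_gaussMeasure (hσ : σ ≠ 0) (t : EuclideanSpace ℝ (Fin d)) :
    charFun (gaussMeasure d σ) t = cexp (-(σ ^ 2 * ‖t‖ ^ 2 / 2)) := by
  have hb : 0 < ((2 * σ ^ 2 : ℝ)⁻¹ : ℂ).re := by norm_cast; positivity
  have h2πσ : 0 < 2 * π * σ ^ 2 := by positivity
  rw [charFun_apply, gaussMeasure, integral_withDensity_eq_integral_toReal_smul₀ (by fun_prop)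
    (by simp)]
  have key := GaussianFourier.integral_cexp_neg_mul_sq_norm_add hb I t
  simp only [finrank_euclideanSpace, Fintype.card_fin] at key
  calc _ = ∫ x : EuclideanSpace ℝ (Fin d), (((2 * π * σ ^ 2) ^ (-(d : ℝ) / 2) : ℝ) : ℂ) *
        cexp (-((2 * σ ^ 2 : ℝ)⁻¹ : ℂ) * ‖x‖ ^ 2 + I * ((inner ℝ t x : ℝ) : ℂ)) := by
        refine integral_congr_ae (ae_of_all _ fun x => ?_)
        dsimp only
        rw [ENNReal.toReal_ofReal (by positivity), real_inner_comm, Complex.real_smul,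
          Complex.ofReal_mul, mul_assoc, Complex.ofReal_exp, ← Complex.exp_add]
        congr 2
        push_cast
        ring
    _ = _ := by
        have hnorm : (((2 * π * σ ^ 2) ^ (-(d : ℝ) / 2) : ℝ) : ℂ) *
            ((π : ℂ) / ((2 * σ ^ 2 : ℝ) : ℂ)⁻¹) ^ ((d : ℂ) / 2) = 1 := by
          rw [show (π : ℂ) / ((2 * σ ^ 2 : ℝ) : ℂ)⁻¹ = ((2 * π * σ ^ 2 : ℝ) : ℂ) by
              push_cast; rw [div_inv_eq_mul]; ring,
            show (d : ℂ) / 2 = (((d : ℝ) / 2 : ℝ) : ℂ) by push_cast; ring,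
            ← ofReal_cpow h2πσ.le, ← ofReal_mul, neg_div, rpow_neg h2πσ.le,
            inv_mul_cancel₀ (by positivity), ofReal_one]
        rw [integral_const_mul, key, ← mul_assoc, hnorm, one_mul]
        congr 1
        push_cast
        rw [I_sq]
        field_simp
        ring

lemma gaussMeasure_eq_map_smul_stdGaussian (hσ : σ ≠ 0) :
    gaussMeasure d σ = (stdGaussian (EuclideanSpace ℝ (Fin d))).map (σ • ·) := by
  have := isFiniteMeasure_gaussMeasure (d := d) hσ
  refine Measure.ext_of_charFun (funext fun t => ?_)
  have hsq : (‖σ‖ * ‖t‖) ^ 2 = σ ^ 2 * ‖t‖ ^ 2 := by rw [mul_pow, Real.norm_eq_abs, sq_abs]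
  rw [charFun_gaussMeasure hσ, charFun_map_smul, charFun_stdGaussian, norm_smul,
    ← ofReal_pow (‖σ‖ * ‖t‖), hsq]
  push_cast
  ring_nf

lemma gaussMeasure_real_inner_le (hσ : 0 < σ) {u : EuclideanSpace ℝ (Fin d)} (hu : ‖u‖ = 1)
    (c : ℝ) : (gaussMeasure d σ).real {η | ⟪u, η⟫ ≤ c} = Phi (c / σ) := by
  have hpre : (σ • ·) ⁻¹' {η : EuclideanSpace ℝ (Fin d) | ⟪u, η⟫ ≤ c} =
      (fun x => ⟪u, x⟫) ⁻¹' Iic (c / σ) := by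
    ext x
    simp [inner_smul_right, le_div_iff₀' hσ]
  rw [gaussMeasure_eq_map_smul_stdGaussian hσ.ne',
    map_measureReal_apply (by fun_prop) (measurableSet_le (by fun_prop) (by fun_prop)), hpre,
    ← map_measureReal_apply (by fun_prop) measurableSet_Iic, stdGaussian_map_inner hu,
    Phi_eq_cdf_gaussianReal, cdf_eq_real]

lemma gaussMeasure_density_sub (δ η : EuclideanSpace ℝ (Fin d)) :
    (2 * π * σ ^ 2) ^ (-(d : ℝ) / 2) * Real.exp (-‖η - δ‖ ^ 2 / (2 * σ ^ 2)) =
      (2 * π * σ ^ 2) ^ (-(d : ℝ) / 2) * Real.exp (-‖η‖ ^ 2 / (2 * σ ^ 2)) *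
        Real.exp ((⟪δ, η⟫ - ‖δ‖ ^ 2 / 2) / σ ^ 2) := by
  rw [mul_assoc _ (Real.exp _), ← Real.exp_add, norm_sub_sq_real, real_inner_comm]
  ring_nf

lemma gaussMeasure_map_add_right (δ : EuclideanSpace ℝ (Fin d)) :
    (gaussMeasure d σ).map (· + δ) = (gaussMeasure d σ).withDensity
      fun η => ENNReal.ofReal (Real.exp ((⟪δ, η⟫ - ‖δ‖ ^ 2 / 2) / σ ^ 2)) := by
  ext s hs
  rw [Measure.map_apply (measurable_add_const δ) hs, gaussMeasure, withDensity_apply _ hs,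
    setLIntegral_withDensity_eq_setLIntegral_mul _ (by fun_prop) (by fun_prop) hs,
    withDensity_apply _ (measurable_add_const δ hs),
    ← lintegral_indicator (measurable_add_const δ hs), ← lintegral_indicator hs]
  conv_rhs => rw [← lintegral_add_right_eq_self _ δ]
  refine lintegral_congr fun η => ?_
  by_cases hη : η + δ ∈ s
  · rw [indicator_of_mem (by exact hη), indicator_of_mem hη, Pi.mul_apply,
      ← ENNReal.ofReal_mul (by positivity), ← gaussMeasure_density_sub, add_sub_cancel_right]
  · rw [indicator_of_notMem (by exact hη), indicator_of_notMem hη]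

lemma integrable_exp_inner_gaussMeasure (hσ : σ ≠ 0) (δ : EuclideanSpace ℝ (Fin d)) :
    Integrable (fun η => Real.exp ((⟪δ, η⟫ - ‖δ‖ ^ 2 / 2) / σ ^ 2)) (gaussMeasure d σ) := by
  have := isFiniteMeasure_gaussMeasure (d := d) hσ
  refine ⟨by fun_prop, (hasFiniteIntegral_iff_ofReal (ae_of_all _ fun η => by positivity)).2 ?_⟩
  rw [← setLIntegral_univ, ← withDensity_apply _ MeasurableSet.univ, ← gaussMeasure_map_add_right]
  exact measure_lt_top _ _

lemma integral_comp_add_right_gaussMeasure (δ : EuclideanSpace ℝ (Fin d))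
    (f : EuclideanSpace ℝ (Fin d) → ℝ) :
    ∫ η, f (η + δ) ∂gaussMeasure d σ =
      ∫ η, f η * Real.exp ((⟪δ, η⟫ - ‖δ‖ ^ 2 / 2) / σ ^ 2) ∂gaussMeasure d σ := by
  rw [← (measurableEmbedding_addRight δ).integral_map, gaussMeasure_map_add_right,
    integral_withDensity_eq_integral_toReal_smul (by fun_prop) (ae_of_all _ fun _ => by simp)]
  simp_rw [ENNReal.toReal_ofReal (Real.exp_nonneg _), smul_eq_mul, mul_comm]

lemma Phi_sub_le_integral_comp_add_right (hσ : 0 < σ) {h : EuclideanSpace ℝ (Fin d) → ℝ}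
    (hm : Measurable h) (h01 : ∀ η, h η ∈ Icc 0 1) (δ : EuclideanSpace ℝ (Fin d))
    (hp : ∫ η, h η ∂gaussMeasure d σ ∈ Ioo 0 1) :
    Phi (PhiInv (∫ η, h η ∂gaussMeasure d σ) - ‖δ‖ / σ) ≤ ∫ η, h (η + δ) ∂gaussMeasure d σ := by
  have := isFiniteMeasure_gaussMeasure (d := d) hσ.ne'
  rcases eq_or_ne δ 0 with rfl | hδ
  · simp [Phi_PhiInv hp]
  set a := PhiInv (∫ η, h η ∂gaussMeasure d σ)
  set u := ‖δ‖⁻¹ • δ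
  have hu : ‖u‖ = 1 := norm_smul_inv_norm hδ
  have hδu : ∀ η, ⟪δ, η⟫ = ‖δ‖ * ⟪u, η⟫ := fun η => by
    rw [real_inner_smul_left, mul_inv_cancel_left₀ (norm_ne_zero_iff.2 hδ)]
  set S := {η : EuclideanSpace ℝ (Fin d) | ⟪u, η⟫ ≤ σ * a}
  have hS : MeasurableSet S := measurableSet_le (by fun_prop) (by fun_prop)
  have hsize : ∫ η, h η ∂gaussMeasure d σ = (gaussMeasure d σ).real S := by
    rw [gaussMeasure_real_inner_le hσ hu, mul_div_cancel_left₀ _ hσ.ne', Phi_PhiInv hp]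
  have huδ : ⟪u, δ⟫ = ‖δ‖ := by
    rw [real_inner_smul_left, real_inner_self_eq_norm_sq, sq,
      inv_mul_cancel_left₀ (norm_ne_zero_iff.2 hδ)]
  have hpre : (· + δ) ⁻¹' S = {η | ⟪u, η⟫ ≤ σ * a - ‖δ‖} := by
    ext η
    simp only [S, mem_preimage, mem_ofPred_eq, inner_add_right, huδ, le_sub_iff_add_le]
  have hpower : ∫ η in S, Real.exp ((⟪δ, η⟫ - ‖δ‖ ^ 2 / 2) / σ ^ 2) ∂gaussMeasure d σ =
      Phi (a - ‖δ‖ / σ) := calc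
    _ = ∫ η, S.indicator 1 η * Real.exp ((⟪δ, η⟫ - ‖δ‖ ^ 2 / 2) / σ ^ 2) ∂gaussMeasure d σ := by
      rw [← integral_indicator hS]
      congr 1 with η
      by_cases hη : η ∈ S <;> simp [hη]
    _ = ∫ η, S.indicator 1 (η + δ) ∂gaussMeasure d σ :=
      (integral_comp_add_right_gaussMeasure δ _).symm
    _ = (gaussMeasure d σ).real ((· + δ) ⁻¹' S) := by
      rw [← integral_indicator_one (measurable_add_const δ hS)]
      rfl
    _ = Phi (a - ‖δ‖ / σ) := by
      rw [hpre, gaussMeasure_real_inner_le hσ hu, sub_div, mul_div_cancel_left₀ _ hσ.ne']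
  calc Phi (a - ‖δ‖ / σ)
      = ∫ η in S, Real.exp ((⟪δ, η⟫ - ‖δ‖ ^ 2 / 2) / σ ^ 2) ∂gaussMeasure d σ := hpower.symm
    _ ≤ ∫ η, h η * Real.exp ((⟪δ, η⟫ - ‖δ‖ ^ 2 / 2) / σ ^ 2) ∂gaussMeasure d σ := by
      refine neyman_pearson (k := Real.exp ((‖δ‖ * (σ * a) - ‖δ‖ ^ 2 / 2) / σ ^ 2)) hS
        (integrable_exp_inner_gaussMeasure hσ.ne' δ) hm.aestronglyMeasurable h01 (fun η hη => ?_)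
        (fun η hη => ?_) hsize
      · rw [hδu]
        gcongr
        exact hη
      · rw [hδu]
        gcongr
        exact (not_le.1 hη).le
    _ = ∫ η, h (η + δ) ∂gaussMeasure d σ := (integral_comp_add_right_gaussMeasure δ h).symm

lemma PhiInv_integral_sub_le (hσ : 0 < σ) {f : EuclideanSpace ℝ (Fin d) → ℝ}
    (hm : Measurable f) (h01 : ∀ w, f w ∈ Icc 0 1) {x x' : EuclideanSpace ℝ (Fin d)}
    (hx : ∫ η, f (x + η) ∂gaussMeasure d σ ∈ Ioo 0 1)
    (hx' : ∫ η, f (x' + η) ∂gaussMeasure d σ ∈ Ioo 0 1) :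
    PhiInv (∫ η, f (x + η) ∂gaussMeasure d σ) - ‖x' - x‖ / σ ≤
      PhiInv (∫ η, f (x' + η) ∂gaussMeasure d σ) := by
  have h := Phi_sub_le_integral_comp_add_right (h := fun η => f (x + η)) hσ
    (hm.comp (measurable_const_add x)) (fun η => h01 _) (x' - x) hx
  simp_rw [show ∀ η, x + (η + (x' - x)) = x' + η from fun η => by abel] at h
  rwa [← Phi_PhiInv hx', Phi_strictMono.le_iff_le] at h

end GaussMeasure

theorem soft_rs_certification_general (d K : ℕ) (σ : ℝ) (hσ : 0 < σ)
    (z : EuclideanSpace ℝ (Fin d) → Fin K → ℝ) (hz : Measurable z)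
    (hsimplex : ∀ x, (∀ c, 0 ≤ z x c) ∧ ∑ c, z x c = 1)
    (zhat : Fin K → EuclideanSpace ℝ (Fin d) → ℝ)
    (hzhat : ∀ c x, zhat c x = ∫ η, z (x + η) c ∂(gaussMeasure d σ))
    (hrange : ∀ c x, zhat c x ∈ Set.Ioo (0 : ℝ) 1)
    (x : EuclideanSpace ℝ (Fin d)) (y : Fin K)
    (M : ℝ) (hM : IsGreatest {v | ∃ y', y' ≠ y ∧ v = zhat y' x} M)
    (R : ℝ) (hR : R = σ / 2 * (PhiInv (zhat y x) - PhiInv M)) :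
    ∀ δ : EuclideanSpace ℝ (Fin d), ‖δ‖ < R →
      ∀ y', y' ≠ y → zhat y' (x + δ) ≤ zhat y (x + δ) := by
  intro δ hδ y' hy'
  have hz01 : ∀ c w, z w c ∈ Icc 0 1 := fun c w =>
    ⟨(hsimplex w).1 c, (hsimplex w).2 ▸ Finset.single_le_sum (fun i _ => (hsimplex w).1 i)
      (Finset.mem_univ c)⟩
  have hlip : ∀ c w w', PhiInv (zhat c w) - ‖w' - w‖ / σ ≤ PhiInv (zhat c w') := fun c w w' => by
    have h := PhiInv_integral_sub_le (f := fun w => z w c) hσ ((measurable_pi_apply c).comp hz)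
      (hz01 c) (hzhat c w ▸ hrange c w) (hzhat c w' ▸ hrange c w')
    rwa [← hzhat, ← hzhat] at h
  have hyδ := hlip y x (x + δ)
  have hy'δ := hlip y' (x + δ) x
  rw [add_sub_cancel_left] at hyδ
  rw [sub_add_cancel_left, norm_neg] at hy'δ
  have hMrange : M ∈ Ioo 0 1 := by
    obtain ⟨c, -, rfl⟩ := hM.1
    exact hrange c x
  have hyM : PhiInv (zhat y' x) ≤ PhiInv M :=
    (PhiInv_le_PhiInv_iff (hrange y' x) hMrange).2 (hM.2 ⟨y', hy', rfl⟩)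
  have hgap : 2 * (‖δ‖ / σ) < PhiInv (zhat y x) - PhiInv M := by
    rw [hR] at hδ
    rw [← mul_div_assoc, div_lt_iff₀ hσ]
    linarith
  exact (PhiInv_le_PhiInv_iff (hrange y' _) (hrange y _)).1 (by linarith)

theorem soft_rs_certification (d K : ℕ) (hK : 2 ≤ K) (σ : ℝ) (hσ : 0 < σ)
    (z : EuclideanSpace ℝ (Fin d) → Fin K → ℝ) (hz : Measurable z)
    (hsimplex : ∀ x, (∀ c, 0 ≤ z x c) ∧ ∑ c, z x c = 1)
    (zhat : Fin K → EuclideanSpace ℝ (Fin d) → ℝ)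
    (hzhat : ∀ c x, zhat c x = ∫ η, z (x + η) c ∂(gaussMeasure d σ))
    (hrange : ∀ c x, zhat c x ∈ Set.Ioo (0 : ℝ) 1)
    (x : EuclideanSpace ℝ (Fin d)) (y : Fin K)
    (hcorrect : ∀ y', y' ≠ y → zhat y' x ≤ zhat y x)
    (M : ℝ) (hM : IsGreatest {v | ∃ y', y' ≠ y ∧ v = zhat y' x} M)
    (R : ℝ) (hR : R = σ / 2 * (PhiInv (zhat y x) - PhiInv M)) :
    ∀ δ : EuclideanSpace ℝ (Fin d), ‖δ‖ < R →
      ∀ y', y' ≠ y → zhat y' (x + δ) ≤ zhat y (x + δ) :=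
  soft_rs_certification_general d K σ hσ z hz hsimplex zhat hzhat hrange x y M hM R hR
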